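/- If a nonnegative differentiable function Z satisfies Z'(t) ≤ (η - s(t)) Z(t) for all t ≥ t₀, where s is continuous and T-periodic with η < (1/T) ∫_{t₀}^{t₀+T} s(τ) dτ, and η - s is bounded above, then Z(t) → 0 as t → ∞. -/

import Mathlib

/-!
Multiplying by the integrating factor `exp (∫ (s - η))` turns `Z' ≤ (η - s) Z` into the statement
that `Z · exp (∫ (s - η))` is nonincreasing, so `Z t ≤ C · exp (-∫₀ᵗ (s - η))`. Since `s - η` is
periodic with positive integral over a period, its primitive grows linearly, and `Z` is squeezed
to `0`.
-/

open Filter intervalIntegral Real Set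

theorem antitoneOn_mul_exp_integral {Z g : ℝ → ℝ} {a : ℝ} (hg : Continuous g)
    (hZ : Differentiable ℝ Z) (h : ∀ t ≥ a, deriv Z t ≤ -g t * Z t) :
    AntitoneOn (fun t => Z t * exp (∫ τ in 0..t, g τ)) (Ici a) := by
  have hderiv : ∀ t, HasDerivAt (fun t => Z t * exp (∫ τ in 0..t, g τ))
      (deriv Z t * exp (∫ τ in 0..t, g τ) + Z t * (exp (∫ τ in 0..t, g τ) * g t)) t :=
    fun t => (hZ t).hasDerivAt.mul (hg.integral_hasStrictDerivAt 0 t).hasDerivAt.exp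
  refine antitoneOn_of_deriv_nonpos (convex_Ici a)
    (fun t _ => (hderiv t).continuousAt.continuousWithinAt)
    (fun t _ => (hderiv t).differentiableAt.differentiableWithinAt) fun t ht => ?_
  rw [interior_Ici] at ht
  have hZ' : deriv Z t + g t * Z t ≤ 0 := by linarith [h t ht.le]
  rw [(hderiv t).deriv]
  nlinarith [exp_pos (∫ τ in 0..t, g τ)]

theorem tendsto_zero_of_deriv_le_neg_mul {Z g : ℝ → ℝ} {a : ℝ} (hg : Continuous g)
    (hZ : Differentiable ℝ Z) (hZ_nonneg : ∀ t, 0 ≤ Z t) (h : ∀ t ≥ a, deriv Z t ≤ -g t * Z t)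
    (hg_int : Tendsto (fun t => ∫ τ in 0..t, g τ) atTop atTop) :
    Tendsto Z atTop (nhds 0) := by
  set C := Z a * exp (∫ τ in 0..a, g τ)
  have hbound : ∀ t ≥ a, Z t ≤ C * exp (-∫ τ in 0..t, g τ) := fun t ht => by
    calc Z t = Z t * exp (∫ τ in 0..t, g τ) * exp (-∫ τ in 0..t, g τ) := by
          rw [mul_assoc, ← exp_add, add_neg_cancel, exp_zero, mul_one]
      _ ≤ C * exp (-∫ τ in 0..t, g τ) := by
          gcongr
          exact antitoneOn_mul_exp_integral hg hZ h self_mem_Ici ht ht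
  have hdecay : Tendsto (fun t => C * exp (-∫ τ in 0..t, g τ)) atTop (nhds 0) := by
    simpa using (tendsto_exp_atBot.comp (tendsto_neg_atTop_atBot.comp hg_int)).const_mul C
  refine squeeze_zero' (Eventually.of_forall hZ_nonneg) ?_ hdecay
  filter_upwards [eventually_ge_atTop a] with t ht
  exact hbound t ht

theorem zooplankton_decay_general
    (T t₀ η : ℝ) (hT : 0 < T) (s Z : ℝ → ℝ)
    (hs : Continuous s)
    (hper : ∀ t, s (t + T) = s t)
    (hη : η * T < ∫ τ in t₀..(t₀ + T), s τ)
    (hZdiff : Differentiable ℝ Z)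
    (hZnonneg : ∀ t, 0 ≤ Z t)
    (hZineq : ∀ t ≥ t₀, deriv Z t ≤ (η - s t) * Z t) :
    Tendsto Z atTop (nhds 0) := by
  have hperiodic : Function.Periodic (fun t => s t - η) T := fun t => by simp only [hper]
  have hpos : 0 < ∫ τ in 0..T, (s τ - η) := by
    have := hperiodic.intervalIntegral_add_eq 0 t₀
    rw [zero_add] at this
    rw [this, integral_sub (hs.intervalIntegrable _ _) intervalIntegrable_const,
      integral_const, add_sub_cancel_left, smul_eq_mul]
    linarith
  refine tendsto_zero_of_deriv_le_neg_mul (a := t₀) (by fun_prop) hZdiff hZnonneg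
    (fun t ht => ?_) (hperiodic.tendsto_atTop_intervalIntegral_of_pos hpos hT)
  simpa only [neg_sub] using hZineq t ht

theorem zooplankton_decay
    (T t₀ η M : ℝ) (hT : 0 < T) (s Z : ℝ → ℝ)
    (hs : Continuous s)
    (hper : ∀ t, s (t + T) = s t)
    (hη : η * T < ∫ τ in t₀..(t₀ + T), s τ)
    (hbdd : ∀ t, η - s t ≤ M)
    (hZdiff : Differentiable ℝ Z)
    (hZnonneg : ∀ t, 0 ≤ Z t)
    (hZineq : ∀ t ≥ t₀, deriv Z t ≤ (η - s t) * Z t) :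
    Tendsto Z atTop (nhds 0) :=
  zooplankton_decay_general T t₀ η hT s Z hs hper hη hZdiff hZnonneg hZineq
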